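/- Let (A,↘,↗,↖,↙) be a quadri-algebra and let r ∈ A⊗A be skew-symmetric. Then: (1) r₁₃≻r₂₃ = r₂₃∧r₁₂ + r₁₂↙r₁₃ holds if and only if r₁₃↙r₂₃ = −r₂₃≻r₁₂ + r₁₂∧r₁₃ holds; (2) r₁₃≺r₂₃ = −r₂₃↗r₁₂ − r₁₂↘r₁₃ − r₁₂↙r₁₃ holds if and only if r₁₃↗r₂₃ = −r₂₃∨r₁₂ + r₁₂≺r₁₃ holds; (3) r₁₃*r₂₃ = r₂₃↖r₁₂ − r₁₂↘r₁₃ holds if and only if r₁₃↘r₂₃ = r₂₃*r₁₂ − r₁₂↖r₁₃ holds; (4) r₁₃*r₂₃ = r₂₃↖r₁₂ − r₁₂↘r₁₃ holds if and only if r₁₃↖r₂₃ = r₂₃↘r₁₂ − r₁₂*r₁₃ holds. -/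
import Mathlib


open TensorProduct LinearMap Module

/-- Quadri-algebra axioms for the four products ↘ (`dse`), ↗ (`dne`), ↖ (`dnw`), ↙ (`dsw`). -/
def IsQuadri {K A : Type*} [Field K] [AddCommGroup A] [Module K A]
    (dse dne dnw dsw : A →ₗ[K] A →ₗ[K] A) : Prop :=
  (∀ x y z : A, dnw (dnw x y) z = dnw x (dse y z + dne y z + dnw y z + dsw y z)) ∧
  (∀ x y z : A, dnw (dne x y) z = dne x (dnw y z + dsw y z)) ∧
  (∀ x y z : A, dne (dne x y + dnw x y) z = dne x (dne y z + dse y z)) ∧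
  (∀ x y z : A, dnw (dsw x y) z = dsw x (dne y z + dnw y z)) ∧
  (∀ x y z : A, dnw (dse x y) z = dse x (dnw y z)) ∧
  (∀ x y z : A, dne (dse x y + dsw x y) z = dse x (dne y z)) ∧
  (∀ x y z : A, dsw (dnw x y + dsw x y) z = dsw x (dse y z + dsw y z)) ∧
  (∀ x y z : A, dsw (dne x y + dse x y) z = dse x (dsw y z)) ∧
  (∀ x y z : A, dse (dse x y + dne x y + dnw x y + dsw x y) z = dse x (dse y z))

/-- `r₁₂ ∘ r₁₃` for `r ∈ A ⊗ A`: `Σ (aᵢ ∘ aⱼ) ⊗ bᵢ ⊗ bⱼ`. -/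
noncomputable def tprod12_13 {K A : Type*} [Field K] [AddCommGroup A] [Module K A]
    (m : A →ₗ[K] A →ₗ[K] A) (r : A ⊗[K] A) : A ⊗[K] (A ⊗[K] A) :=
  (TensorProduct.map (TensorProduct.lift m) LinearMap.id)
    ((TensorProduct.tensorTensorTensorComm K A A A A) (r ⊗ₜ[K] r))

/-- `r₁₃ ∘ r₂₃` for `r ∈ A ⊗ A`: `Σ aᵢ ⊗ aⱼ ⊗ (bᵢ ∘ bⱼ)`. -/
noncomputable def tprod13_23 {K A : Type*} [Field K] [AddCommGroup A] [Module K A]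
    (m : A →ₗ[K] A →ₗ[K] A) (r : A ⊗[K] A) : A ⊗[K] (A ⊗[K] A) :=
  (TensorProduct.assoc K A A A)
    ((TensorProduct.map LinearMap.id (TensorProduct.lift m))
      ((TensorProduct.tensorTensorTensorComm K A A A A) (r ⊗ₜ[K] r)))

/-- `r₂₃ ∘ r₁₂` for `r ∈ A ⊗ A`: `Σ aᵢ ⊗ (aⱼ ∘ bᵢ) ⊗ bⱼ`. -/
noncomputable def tprod23_12 {K A : Type*} [Field K] [AddCommGroup A] [Module K A]
    (m : A →ₗ[K] A →ₗ[K] A) (r : A ⊗[K] A) : A ⊗[K] (A ⊗[K] A) :=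
  (TensorProduct.map LinearMap.id (TensorProduct.comm K A A).toLinearMap)
    ((TensorProduct.assoc K A A A)
      ((TensorProduct.map LinearMap.id (TensorProduct.lift m))
        ((TensorProduct.tensorTensorTensorComm K A A A A)
          ((TensorProduct.map (TensorProduct.comm K A A).toLinearMap LinearMap.id)
            ((TensorProduct.tensorTensorTensorComm K A A A A) (r ⊗ₜ[K] r))))))

section CycLemmas

variable {K A : Type*} [Field K] [AddCommGroup A] [Module K A]

/-- Cyclic permutation `x ⊗ (y ⊗ z) ↦ z ⊗ (x ⊗ y)`. -/
noncomputable def Cyc (K A : Type*) [Field K] [AddCommGroup A] [Module K A] :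
    A ⊗[K] (A ⊗[K] A) →ₗ[K] A ⊗[K] (A ⊗[K] A) :=
  (TensorProduct.comm K (A ⊗[K] A) A).toLinearMap ∘ₗ
    (TensorProduct.assoc K A A A).symm.toLinearMap

noncomputable def T13 (m : A →ₗ[K] A →ₗ[K] A) :
    (A ⊗[K] A) ⊗[K] (A ⊗[K] A) →ₗ[K] A ⊗[K] (A ⊗[K] A) :=
  (TensorProduct.assoc K A A A).toLinearMap ∘ₗ
    (TensorProduct.map LinearMap.id (TensorProduct.lift m)) ∘ₗ
      (TensorProduct.tensorTensorTensorComm K A A A A).toLinearMap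

noncomputable def T12 (m : A →ₗ[K] A →ₗ[K] A) :
    (A ⊗[K] A) ⊗[K] (A ⊗[K] A) →ₗ[K] A ⊗[K] (A ⊗[K] A) :=
  (TensorProduct.map (TensorProduct.lift m) LinearMap.id) ∘ₗ
    (TensorProduct.tensorTensorTensorComm K A A A A).toLinearMap

noncomputable def T23 (m : A →ₗ[K] A →ₗ[K] A) :
    (A ⊗[K] A) ⊗[K] (A ⊗[K] A) →ₗ[K] A ⊗[K] (A ⊗[K] A) :=
  (TensorProduct.map LinearMap.id (TensorProduct.comm K A A).toLinearMap) ∘ₗ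
    (TensorProduct.assoc K A A A).toLinearMap ∘ₗ
      (TensorProduct.map LinearMap.id (TensorProduct.lift m)) ∘ₗ
        (TensorProduct.tensorTensorTensorComm K A A A A).toLinearMap ∘ₗ
          (TensorProduct.map (TensorProduct.comm K A A).toLinearMap LinearMap.id) ∘ₗ
            (TensorProduct.tensorTensorTensorComm K A A A A).toLinearMap

noncomputable def Sw (K A : Type*) [Field K] [AddCommGroup A] [Module K A] :
    A ⊗[K] A →ₗ[K] A ⊗[K] A := (TensorProduct.comm K A A).toLinearMap

lemma tprod13_eq (m : A →ₗ[K] A →ₗ[K] A) (r : A ⊗[K] A) :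
    tprod13_23 m r = T13 m (r ⊗ₜ[K] r) := rfl

lemma tprod12_eq (m : A →ₗ[K] A →ₗ[K] A) (r : A ⊗[K] A) :
    tprod12_13 m r = T12 m (r ⊗ₜ[K] r) := rfl

lemma tprod23_eq (m : A →ₗ[K] A →ₗ[K] A) (r : A ⊗[K] A) :
    tprod23_12 m r = T23 m (r ⊗ₜ[K] r) := rfl

lemma cycT13 (m : A →ₗ[K] A →ₗ[K] A) :
    Cyc K A ∘ₗ T13 m = T12 m ∘ₗ TensorProduct.map (Sw K A) (Sw K A) := by
  ext x y u v
  simp [Cyc, T13, T12, Sw]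

lemma cycT12 (m : A →ₗ[K] A →ₗ[K] A) :
    Cyc K A ∘ₗ T12 m = T23 m ∘ₗ TensorProduct.map LinearMap.id (Sw K A) := by
  ext x y u v
  simp [Cyc, T12, T23, Sw]

lemma cycT23 (m : A →ₗ[K] A →ₗ[K] A) :
    Cyc K A ∘ₗ T23 m = T13 m ∘ₗ TensorProduct.map (Sw K A) LinearMap.id := by
  ext x y u v
  simp [Cyc, T13, T23, Sw]

lemma T13_add (m m' : A →ₗ[K] A →ₗ[K] A) : T13 (m + m') = T13 m + T13 m' := by
  ext x y u v
  simp [T13, tmul_add]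

lemma T12_add (m m' : A →ₗ[K] A →ₗ[K] A) : T12 (m + m') = T12 m + T12 m' := by
  ext x y u v
  simp [T12, add_tmul]

lemma T23_add (m m' : A →ₗ[K] A →ₗ[K] A) : T23 (m + m') = T23 m + T23 m' := by
  ext x y u v
  simp [T23, tmul_add, add_tmul]

variable {r : A ⊗[K] A} (hskew : (TensorProduct.comm K A A) r = - r)
include hskew

lemma cyc13 (m : A →ₗ[K] A →ₗ[K] A) :
    Cyc K A (tprod13_23 m r) = tprod12_13 m r := by
  rw [tprod13_eq, tprod12_eq, ← LinearMap.comp_apply, cycT13, LinearMap.comp_apply,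
    TensorProduct.map_tmul]
  show _ = T12 m (r ⊗ₜ[K] r)
  rw [show Sw K A r = -r from hskew, neg_tmul, tmul_neg, neg_neg]

lemma cyc12 (m : A →ₗ[K] A →ₗ[K] A) :
    Cyc K A (tprod12_13 m r) = - tprod23_12 m r := by
  rw [tprod12_eq, tprod23_eq, ← LinearMap.comp_apply, cycT12, LinearMap.comp_apply,
    TensorProduct.map_tmul]
  rw [show Sw K A r = -r from hskew, LinearMap.id_apply, tmul_neg, map_neg]

lemma cyc23 (m : A →ₗ[K] A →ₗ[K] A) :
    Cyc K A (tprod23_12 m r) = - tprod13_23 m r := by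
  rw [tprod23_eq, tprod13_eq, ← LinearMap.comp_apply, cycT23, LinearMap.comp_apply,
    TensorProduct.map_tmul]
  rw [show Sw K A r = -r from hskew, LinearMap.id_apply, neg_tmul, map_neg]

omit hskew

lemma tprod13_add (m m' : A →ₗ[K] A →ₗ[K] A) (r : A ⊗[K] A) :
    tprod13_23 (m + m') r = tprod13_23 m r + tprod13_23 m' r := by
  rw [tprod13_eq, tprod13_eq, tprod13_eq, T13_add]; rfl

lemma tprod12_add (m m' : A →ₗ[K] A →ₗ[K] A) (r : A ⊗[K] A) :
    tprod12_13 (m + m') r = tprod12_13 m r + tprod12_13 m' r := by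
  rw [tprod12_eq, tprod12_eq, tprod12_eq, T12_add]; rfl

lemma tprod23_add (m m' : A →ₗ[K] A →ₗ[K] A) (r : A ⊗[K] A) :
    tprod23_12 (m + m') r = tprod23_12 m r + tprod23_12 m' r := by
  rw [tprod23_eq, tprod23_eq, tprod23_eq, T23_add]; rfl

end CycLemmas

/-- Lemma 4.2.4: for a skew-symmetric `r ∈ A ⊗ A` in a quadri-algebra
`(A, ↘, ↗, ↖, ↙)` (with `≻ = ↗ + ↘`, `≺ = ↖ + ↙`, `∨ = ↘ + ↙`, `∧ = ↗ + ↖`,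
`* = ↘ + ↗ + ↖ + ↙`): (3.4.17) ⟺ (4.2.8), (3.4.18) ⟺ (4.2.6),
(3.4.19) ⟺ (4.2.5), and (3.4.19) ⟺ (4.2.7). -/
theorem quadri_skew_tensor_equation_equivalences
    {K A : Type*} [Field K] [CharZero K] [AddCommGroup A] [Module K A]
    (dse dne dnw dsw : A →ₗ[K] A →ₗ[K] A)
    (hq : IsQuadri dse dne dnw dsw)
    (r : A ⊗[K] A)
    (hskew : (TensorProduct.comm K A A) r = - r) :
    ((tprod13_23 (dne + dse) r
        = tprod23_12 (dne + dnw) r + tprod12_13 dsw r) ↔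
     (tprod13_23 dsw r
        = - tprod23_12 (dne + dse) r + tprod12_13 (dne + dnw) r)) ∧
    ((tprod13_23 (dnw + dsw) r
        = - tprod23_12 dne r - tprod12_13 dse r - tprod12_13 dsw r) ↔
     (tprod13_23 dne r
        = - tprod23_12 (dse + dsw) r + tprod12_13 (dnw + dsw) r)) ∧
    ((tprod13_23 (dse + dne + dnw + dsw) r
        = tprod23_12 dnw r - tprod12_13 dse r) ↔
     (tprod13_23 dse r
        = tprod23_12 (dse + dne + dnw + dsw) r - tprod12_13 dnw r)) ∧
    ((tprod13_23 (dse + dne + dnw + dsw) r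
        = tprod23_12 dnw r - tprod12_13 dse r) ↔
     (tprod13_23 dnw r
        = tprod23_12 dse r - tprod12_13 (dse + dne + dnw + dsw) r)) := by
  obtain ⟨-, -, -, -, -, -, -, -, -⟩ := hq
  refine ⟨⟨fun h => ?_, fun h => ?_⟩, ⟨fun h => ?_, fun h => ?_⟩,
    ⟨fun h => ?_, fun h => ?_⟩, ⟨fun h => ?_, fun h => ?_⟩⟩ <;>
  · simp only [tprod13_add, tprod12_add, tprod23_add] at h ⊢
    have h1 := congrArg (Cyc K A) h
    simp only [map_add, map_neg, map_sub, cyc13 hskew, cyc12 hskew, cyc23 hskew] at h1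
    have h2 := congrArg (Cyc K A) h1
    simp only [map_add, map_neg, map_sub, cyc13 hskew, cyc12 hskew, cyc23 hskew] at h2
    first
    | linear_combination (norm := module) h1
    | linear_combination (norm := module) -h1
    | linear_combination (norm := module) h2
    | linear_combination (norm := module) -h2
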